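/- (Layer-wise multi-step projection convergence.) Let the coordinates of ℝ^d be partitioned into Q disjoint blocks (layers), and for a vector v let v^q denote its block-q component and ∇^q f the block-q component of ∇f. Let f_1, …, f_N : ℝ^d → ℝ be L-smooth with ‖∇f_i‖ ≤ G_f, and suppose that for every client i and block q the map θ ↦ ∇^q f_i(θ) is L_q-Lipschitz with respect to the full Euclidean norm. Let ρ_i > 0 sum to 1, ρ_min = min_i ρ_i, c = ρ_min/G_f, F = Σ ρ_i f_i, and assume F ≥ F⋆. Fix η_l, η_g > 0, K_i ≥ 1 with K_max = max_i K_i. Consider a server trajectory θ_{t+1} = θ_t − η_g g_t, where at each round, for every block q, the block components g_i^{t,q} of the nonzero accumulated client updates (from K_i local gradient-descent steps of rate η_l starting at θ_t) satisfy the exact layer-wise alignment ⟨g_i^{t,q}/‖g_i^{t,q}‖, g_t^q⟩ = ρ_i for all i, and ‖g_t^q‖ ≤ G^q. Define B_q = (L_q G_f/2)(G^q + Σ_i ρ_i²), B_layer = Σ_{q=1}^Q B_q, and G_layer² = Σ_{q=1}^Q (G^q)². Then for any T ≥ 1: (1/T) Σ_{t=0}^{T−1} ‖∇F(θ_t)‖²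 ≤ (F(θ_0) − F⋆)/(c η_g T) + L η_g G_layer²/(2c) + (B_layer/c) η_l (K_max − 1). -/

import Mathlib

/-!
A client's block update is `η_l K_i` times the average of the block gradients along its local
trajectory. The trajectory stays within `η_l G_f k` of `θ_t` after `k` steps, so this average lies
within `L_q η_l G_f (K_i - 1) / 2` of `∇^q f_i(θ_t)`, and the exact alignment of the averages with
`g_t^q` transfers to the gradients up to that drift. Weighting by `ρ_i ≥ ρ_min` gives
`⟪∇^q F, g_t^q⟫ ≥ ρ_min ‖∇^q F‖ - η_l (K_max - 1) B_q`; summing over the blocks and using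
`‖∇F‖ ≤ G_f` gives `⟪∇F, g_t⟫ ≥ c ‖∇F‖² - η_l (K_max - 1) B_layer`. The descent lemma with
`‖g_t‖² ≤ G_layer²` and a telescoping sum over the rounds conclude.
-/

open scoped InnerProductSpace BigOperators

/-- Local gradient-descent trajectory. -/
noncomputable def traj {E : Type*} [NormedAddCommGroup E] [InnerProductSpace ℝ E]
    [CompleteSpace E] (f : E → ℝ) (ηl : ℝ) (θ : E) : ℕ → E
  | 0 => θ
  | k + 1 => traj f ηl θ k - ηl • gradient f (traj f ηl θ k)

open Finset

theorem nonneg_of_norm_sub_le_mul_norm_sub {E F : Type*} [NormedAddCommGroup E] [Nontrivial E]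
    [SeminormedAddCommGroup F] {φ : E → F} {L : ℝ} (h : ∀ x y, ‖φ x - φ y‖ ≤ L * ‖x - y‖) :
    0 ≤ L := by
  obtain ⟨x, hx⟩ := exists_ne (0 : E)
  have := (norm_nonneg _).trans (h x 0)
  rw [sub_zero] at this
  exact nonneg_of_mul_nonneg_left this (norm_pos_iff.mpr hx)

theorem norm_sum_smul_le_of_norm_le {ι V : Type*} [Fintype ι] [SeminormedAddCommGroup V]
    [NormedSpace ℝ V] {ρ : ι → ℝ} {v : ι → V} {M : ℝ} (hρ : ∀ i, 0 ≤ ρ i) (hsum : ∑ i, ρ i = 1)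
    (hv : ∀ i, ‖v i‖ ≤ M) : ‖∑ i, ρ i • v i‖ ≤ M := by
  calc ‖∑ i, ρ i • v i‖ ≤ ∑ i, ρ i * M := by
        refine (norm_sum_le _ _).trans (sum_le_sum fun i _ => ?_)
        rw [norm_smul, Real.norm_of_nonneg (hρ i)]
        exact mul_le_mul_of_nonneg_left (hv i) (hρ i)
    _ = M := by rw [← sum_mul, hsum, one_mul]

section Smooth

variable {E : Type*} [NormedAddCommGroup E] [InnerProductSpace ℝ E] [CompleteSpace E]

theorem hasGradientAt_sum_mul {ι : Type*} [Fintype ι] {f : ι → E → ℝ} (ρ : ι → ℝ)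
    (hf : ∀ i, Differentiable ℝ (f i)) (x : E) :
    HasGradientAt (fun y => ∑ i, ρ i * f i y) (∑ i, ρ i • gradient (f i) x) x := by
  rw [hasGradientAt_iff_hasFDerivAt, map_sum]
  exact HasFDerivAt.fun_sum fun i _ => by
    simpa only [map_smul] using
      (hasGradientAt_iff_hasFDerivAt.mp (hf i x).hasGradientAt).const_mul (ρ i)

theorem gradient_sum_mul {ι : Type*} [Fintype ι] {f : ι → E → ℝ} (ρ : ι → ℝ)
    (hf : ∀ i, Differentiable ℝ (f i)) (x : E) :
    gradient (fun y => ∑ i, ρ i * f i y) x = ∑ i, ρ i • gradient (f i) x :=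
  (hasGradientAt_sum_mul ρ hf x).gradient

theorem differentiable_sum_mul {ι : Type*} [Fintype ι] {f : ι → E → ℝ} (ρ : ι → ℝ)
    (hf : ∀ i, Differentiable ℝ (f i)) : Differentiable ℝ (fun y => ∑ i, ρ i * f i y) :=
  fun x => (hasGradientAt_sum_mul ρ hf x).differentiableAt

/-- The descent lemma for a function with `L`-Lipschitz gradient. -/
theorem le_add_inner_gradient_add_sq {f : E → ℝ} {L : ℝ} (hf : Differentiable ℝ f)
    (hL : ∀ x y, ‖gradient f x - gradient f y‖ ≤ L * ‖x - y‖) (x v : E) :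
    f (x + v) ≤ f x + ⟪gradient f x, v⟫_ℝ + L / 2 * ‖v‖ ^ 2 := by
  -- the claim is `ψ 1 ≤ ψ 0`, and `ψ' ≤ 0` on `[0, 1]` by the Lipschitz bound
  set ψ : ℝ → ℝ := fun t => f (x + t • v) - t * ⟪gradient f x, v⟫_ℝ - L / 2 * t ^ 2 * ‖v‖ ^ 2
  have hψ : ∀ t, HasDerivAt ψ
      (⟪gradient f (x + t • v), v⟫_ℝ - ⟪gradient f x, v⟫_ℝ - L * t * ‖v‖ ^ 2) t := by
    intro t
    have hline : HasDerivAt (fun s : ℝ => x + s • v) v t := by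
      simpa using ((hasDerivAt_id t).smul_const v).const_add x
    have hfline := (hf (x + t • v)).hasFDerivAt.comp_hasDerivAt t hline
    rw [← inner_gradient_left] at hfline
    refine ((hfline.sub ((hasDerivAt_id t).mul_const ⟪gradient f x, v⟫_ℝ)).sub
      (((hasDerivAt_pow 2 t).const_mul (L / 2)).mul_const (‖v‖ ^ 2))).congr_deriv ?_
    simp only [one_mul, Nat.cast_ofNat, Nat.reduceSub, pow_one]; ring
  have hanti : AntitoneOn ψ (Set.Icc 0 1) := by
    refine antitoneOn_of_deriv_nonpos (convex_Icc 0 1)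
      (fun t _ => (hψ t).continuousAt.continuousWithinAt)
      (fun t _ => (hψ t).differentiableAt.differentiableWithinAt) fun t ht => ?_
    rw [interior_Icc] at ht
    rw [(hψ t).deriv, ← inner_sub_left]
    calc ⟪gradient f (x + t • v) - gradient f x, v⟫_ℝ - L * t * ‖v‖ ^ 2
        ≤ L * ‖x + t • v - x‖ * ‖v‖ - L * t * ‖v‖ ^ 2 := by
          gcongr
          exact (real_inner_le_norm _ _).trans (by gcongr; exact hL _ _)
      _ = 0 := by
          rw [add_sub_cancel_left, norm_smul, Real.norm_of_nonneg ht.1.le]; ring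
  have := hanti (Set.left_mem_Icc.2 zero_le_one) (Set.right_mem_Icc.2 zero_le_one) zero_le_one
  simp only [ψ, zero_smul, one_smul, add_zero, zero_mul, sub_zero, one_mul, one_pow,
    zero_pow two_ne_zero, mul_zero] at this
  linarith

theorem mul_norm_gradient_sq_le_of_step {F : E → ℝ} {L c β Γ η : ℝ} (hF : Differentiable ℝ F)
    (hL : ∀ x y, ‖gradient F x - gradient F y‖ ≤ L * ‖x - y‖) (hL0 : 0 ≤ L) (hη : 0 < η)
    {θ g : E} (hg : ‖g‖ ^ 2 ≤ Γ) (hdir : c * ‖gradient F θ‖ ^ 2 ≤ ⟪gradient F θ, g⟫_ℝ + β) :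
    c * ‖gradient F θ‖ ^ 2 ≤ (F θ - F (θ - η • g)) / η + L * η * Γ / 2 + β := by
  have hdesc := le_add_inner_gradient_add_sq hF hL θ (-(η • g))
  rw [← sub_eq_add_neg, inner_neg_right, real_inner_smul_right, norm_neg, norm_smul,
    Real.norm_of_nonneg hη.le, mul_pow] at hdesc
  have hinner : ⟪gradient F θ, g⟫_ℝ ≤ (F θ - F (θ - η • g)) / η + L * η * Γ / 2 := by
    rw [div_add' _ _ _ hη.ne', le_div_iff₀ hη]
    nlinarith [mul_le_mul_of_nonneg_left hg (by positivity : 0 ≤ L / 2 * η ^ 2)]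
  linarith

theorem norm_traj_sub_le {f : E → ℝ} {η G : ℝ} (hη : 0 ≤ η) (hG : ∀ x, ‖gradient f x‖ ≤ G)
    (θ : E) (k : ℕ) : ‖traj f η θ k - θ‖ ≤ η * G * k := by
  induction k with
  | zero => simp [traj]
  | succ k ih =>
    calc ‖traj f η θ (k + 1) - θ‖ = ‖(traj f η θ k - θ) - η • gradient f (traj f η θ k)‖ := by
          rw [traj, sub_right_comm]
      _ ≤ η * G * k + η * G := by
          refine (norm_sub_le _ _).trans (add_le_add ih ?_)
          rw [norm_smul, Real.norm_of_nonneg hη]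
          exact mul_le_mul_of_nonneg_left (hG _) hη
      _ = η * G * (k + 1 : ℕ) := by push_cast; ring

end Smooth

theorem norm_sum_range_sub_nsmul_le {V : Type*} [SeminormedAddCommGroup V] (u : V) (w : ℕ → V)
    {a : ℝ} (h : ∀ k, ‖w k - u‖ ≤ a * k) (K : ℕ) :
    ‖∑ k ∈ range K, w k - K • u‖ ≤ a * (K * (K - 1) / 2) := by
  induction K with
  | zero => simp
  | succ K ih =>
    calc ‖∑ k ∈ range (K + 1), w k - (K + 1) • u‖
        = ‖(∑ k ∈ range K, w k - K • u) + (w K - u)‖ := by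
          rw [sum_range_succ, succ_nsmul]; congr 1; abel
      _ ≤ a * (K * (K - 1) / 2) + a * K := (norm_add_le _ _).trans (add_le_add ih (h K))
      _ = a * ((K + 1 : ℕ) * ((K + 1 : ℕ) - 1) / 2) := by push_cast; ring

section Alignment

variable {V : Type*} [NormedAddCommGroup V] [InnerProductSpace ℝ V]

theorem inner_smul_eq_mul_norm_smul {x g : V} {ρ a : ℝ} (hx : x ≠ 0)
    (h : ⟪‖x‖⁻¹ • x, g⟫_ℝ = ρ) (ha : 0 ≤ a) : ⟪a • x, g⟫_ℝ = ρ * ‖a • x‖ := by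
  have hx' : ‖x‖ ≠ 0 := norm_ne_zero_iff.mpr hx
  rw [← h, norm_smul, Real.norm_of_nonneg ha, real_inner_smul_left, real_inner_smul_left]
  field_simp

theorem mul_norm_sub_le_inner_of_norm_sub_le {u m g : V} {ρ δ G : ℝ} (hρ : 0 ≤ ρ)
    (hm : ⟪m, g⟫_ℝ = ρ * ‖m‖) (hum : ‖u - m‖ ≤ δ) (hg : ‖g‖ ≤ G) :
    ρ * ‖u‖ - δ * (ρ + G) ≤ ⟪u, g⟫_ℝ := by
  have hm_norm : ρ * (‖u‖ - δ) ≤ ρ * ‖m‖ := by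
    gcongr; linarith [norm_sub_norm_le u m]
  have herr : -(δ * G) ≤ ⟪u - m, g⟫_ℝ :=
    (neg_le_neg (mul_le_mul hum hg (norm_nonneg g) ((norm_nonneg _).trans hum))).trans
      (neg_le_of_abs_le (abs_real_inner_le_norm _ _))
  rw [← sub_add_cancel u m, inner_add_left, hm, sub_add_cancel]
  linarith

theorem mul_norm_sum_smul_sub_le_inner {ι : Type*} [Fintype ι] {u : ι → V} {g : V}
    {ρ : ι → ℝ} {ρmin δ G : ℝ} (hρmin : 0 ≤ ρmin) (hρ : ∀ i, ρmin ≤ ρ i) (hsum : ∑ i, ρ i = 1)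
    (h : ∀ i, ρ i * ‖u i‖ - δ * (ρ i + G) ≤ ⟪u i, g⟫_ℝ) :
    ρmin * ‖∑ i, ρ i • u i‖ - δ * (G + ∑ i, ρ i ^ 2) ≤ ⟪∑ i, ρ i • u i, g⟫_ℝ := by
  have hρ0 : ∀ i, 0 ≤ ρ i := fun i => hρmin.trans (hρ i)
  have hnorm : ρmin * ‖∑ i, ρ i • u i‖ ≤ ∑ i, ρ i * (ρ i * ‖u i‖) := by
    calc ρmin * ‖∑ i, ρ i • u i‖ ≤ ρmin * ∑ i, ρ i * ‖u i‖ := by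
          gcongr
          refine (norm_sum_le _ _).trans_eq (sum_congr rfl fun i _ => ?_)
          rw [norm_smul, Real.norm_of_nonneg (hρ0 i)]
      _ ≤ ∑ i, ρ i * (ρ i * ‖u i‖) := by
          rw [mul_sum]
          exact sum_le_sum fun i _ => by gcongr; exacts [mul_nonneg (hρ0 i) (norm_nonneg _), hρ i]
  have hsplit : ∑ i, ρ i * (ρ i * ‖u i‖ - δ * (ρ i + G))
      = ∑ i, ρ i * (ρ i * ‖u i‖) - δ * (G + ∑ i, ρ i ^ 2) := by
    have hterm : ∀ i, ρ i * (ρ i * ‖u i‖ - δ * (ρ i + G))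
        = ρ i * (ρ i * ‖u i‖) - δ * ρ i ^ 2 - δ * G * ρ i := fun i => by ring
    simp only [hterm, sum_sub_distrib, ← mul_sum, hsum]
    ring
  rw [sum_inner]
  simp only [real_inner_smul_left]
  linarith [sum_le_sum fun i (_ : i ∈ univ) => mul_le_mul_of_nonneg_left (h i) (hρ0 i)]

end Alignment

section ClientUpdate

variable {E : Type*} [NormedAddCommGroup E] [InnerProductSpace ℝ E] [CompleteSpace E]

noncomputable def clientUpdate (f : E → ℝ) (η : ℝ) (K : ℕ) (θ : E) : E :=
  η • ∑ k ∈ range K, gradient f (traj f η θ k)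

theorem exists_gradient_ne_zero_of_clientUpdate_ne_zero {f : E → ℝ} {η : ℝ} {K : ℕ} {θ : E}
    (h : clientUpdate f η K θ ≠ 0) : ∃ x, gradient f x ≠ 0 := by
  contrapose! h
  simp [clientUpdate, h]

variable {V : Type*} [NormedAddCommGroup V] [NormedSpace ℝ V]

theorem norm_sub_smul_clientUpdate_le (P : E →ₗ[ℝ] V) {f : E → ℝ} {η G LP : ℝ} {K : ℕ}
    (hη : 0 < η) (hK : 0 < K) (hG : ∀ x, ‖gradient f x‖ ≤ G) (hLP0 : 0 ≤ LP)
    (hLP : ∀ x y, ‖P (gradient f x) - P (gradient f y)‖ ≤ LP * ‖x - y‖) (θ : E) :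
    ‖P (gradient f θ) - (η * K)⁻¹ • P (clientUpdate f η K θ)‖ ≤ LP * η * G * (K - 1) / 2 := by
  set u := P (gradient f θ)
  set w : ℕ → V := fun k => P (gradient f (traj f η θ k))
  have hK' : (0 : ℝ) < K := Nat.cast_pos.mpr hK
  have hw : ∀ k, ‖w k - u‖ ≤ LP * η * G * k := fun k => by
    rw [mul_assoc LP, mul_assoc LP]
    exact (hLP _ _).trans (by gcongr; exact norm_traj_sub_le hη.le hG θ k)
  have hscale : (η * K)⁻¹ • P (clientUpdate f η K θ) = (K : ℝ)⁻¹ • ∑ k ∈ range K, w k := by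
    rw [clientUpdate, map_smul, map_sum, smul_smul]
    congr 1
    field_simp
  have hdiff : u - (η * K)⁻¹ • P (clientUpdate f η K θ)
      = (K : ℝ)⁻¹ • ((K : ℝ) • u - ∑ k ∈ range K, w k) := by
    rw [hscale, smul_sub, smul_smul, inv_mul_cancel₀ hK'.ne', one_smul]
  rw [hdiff, norm_smul, norm_inv, Real.norm_natCast, norm_sub_rev, Nat.cast_smul_eq_nsmul]
  calc (K : ℝ)⁻¹ * ‖∑ k ∈ range K, w k - K • u‖
      ≤ (K : ℝ)⁻¹ * (LP * η * G * (K * (K - 1) / 2)) := by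
        gcongr; exact norm_sum_range_sub_nsmul_le u w hw K
    _ = LP * η * G * (K - 1) / 2 := by field_simp

theorem inner_lower_bound_of_aligned_clientUpdates {ι : Type*} [Fintype ι] {V : Type*}
    [NormedAddCommGroup V] [InnerProductSpace ℝ V] (P : E →ₗ[ℝ] V) (f : ι → E → ℝ)
    {ρ : ι → ℝ} {K : ι → ℕ} {ρmin η G LP Γ Kmax : ℝ} (hρmin : 0 ≤ ρmin) (hρ : ∀ i, ρmin ≤ ρ i)
    (hsum : ∑ i, ρ i = 1) (hη : 0 < η) (hK : ∀ i, 0 < K i) (hKmax : ∀ i, (K i : ℝ) ≤ Kmax)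
    (hG : ∀ i x, ‖gradient (f i) x‖ ≤ G) (hLP0 : 0 ≤ LP)
    (hLP : ∀ i x y, ‖P (gradient (f i) x) - P (gradient (f i) y)‖ ≤ LP * ‖x - y‖)
    {θ : E} {g : V} (hne : ∀ i, P (clientUpdate (f i) η (K i) θ) ≠ 0)
    (halign : ∀ i,
      ⟪‖P (clientUpdate (f i) η (K i) θ)‖⁻¹ • P (clientUpdate (f i) η (K i) θ), g⟫_ℝ = ρ i)
    (hg : ‖g‖ ≤ Γ) :
    ρmin * ‖P (∑ i, ρ i • gradient (f i) θ)‖ - LP * η * G * (Kmax - 1) / 2 * (Γ + ∑ i, ρ i ^ 2)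
      ≤ ⟪P (∑ i, ρ i • gradient (f i) θ), g⟫_ℝ := by
  simp only [map_sum, map_smul]
  refine mul_norm_sum_smul_sub_le_inner hρmin hρ hsum fun i => ?_
  have hG0 : 0 ≤ G := (norm_nonneg _).trans (hG i θ)
  have hdrift := norm_sub_smul_clientUpdate_le P hη (hK i) (hG i) hLP0 (hLP i) θ
  refine mul_norm_sub_le_inner_of_norm_sub_le (hρmin.trans (hρ i))
    (inner_smul_eq_mul_norm_smul (hne i) (halign i) (by positivity)) (hdrift.trans ?_) hg
  gcongr
  exact hKmax i

end ClientUpdate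

namespace PiLp

variable {ι : Type*} [Fintype ι]

theorem norm_le_sum_norm {β : ι → Type*} [∀ i, SeminormedAddCommGroup (β i)] (x : PiLp 2 β) :
    ‖x‖ ≤ ∑ i, ‖x i‖ := by
  refine le_of_sq_le_sq ?_ (sum_nonneg fun i _ => norm_nonneg _)
  rw [norm_sq_eq_of_L2]
  exact sum_sq_le_sq_sum_of_nonneg fun i _ => norm_nonneg _

theorem norm_sq_le_sum_sq {β : ι → Type*} [∀ i, SeminormedAddCommGroup (β i)] (x : PiLp 2 β)
    {G : ι → ℝ} (h : ∀ i, ‖x i‖ ≤ G i) : ‖x‖ ^ 2 ≤ ∑ i, G i ^ 2 := by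
  rw [norm_sq_eq_of_L2]
  exact sum_le_sum fun i _ => pow_le_pow_left₀ (norm_nonneg _) (h i) 2

theorem mul_norm_sub_le_inner {β : ι → Type*} [∀ i, NormedAddCommGroup (β i)]
    [∀ i, InnerProductSpace ℝ (β i)] (x y : PiLp 2 β) {a : ℝ} {b : ι → ℝ} (ha : 0 ≤ a)
    (h : ∀ i, a * ‖x i‖ - b i ≤ ⟪x i, y i⟫_ℝ) : a * ‖x‖ - ∑ i, b i ≤ ⟪x, y⟫_ℝ := by
  rw [inner_apply]
  calc a * ‖x‖ - ∑ i, b i ≤ ∑ i, (a * ‖x i‖ - b i) := by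
        rw [sum_sub_distrib, ← mul_sum]
        gcongr
        exact norm_le_sum_norm x
    _ ≤ ∑ i, ⟪x i, y i⟫_ℝ := sum_le_sum fun i _ => h i

end PiLp

theorem div_mul_sq_le_mul {a G r : ℝ} (ha : 0 ≤ a) (hG : 0 < G) (hr : 0 ≤ r) (hrG : r ≤ G) :
    a / G * r ^ 2 ≤ a * r := by
  rw [show a / G * r ^ 2 = a * r * (r / G) by ring]
  exact mul_le_of_le_one_right (mul_nonneg ha hr) ((div_le_one hG).mpr hrG)

theorem one_div_mul_sum_le_of_descent {a φ : ℕ → ℝ} {φstar c η C : ℝ} (hc : 0 < c)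
    (hη : 0 < η) (hφ : ∀ t, φstar ≤ φ t) (h : ∀ t, c * a t ≤ (φ t - φ (t + 1)) / η + C)
    {T : ℕ} (hT : 0 < T) :
    1 / (T : ℝ) * ∑ t ∈ range T, a t ≤ (φ 0 - φstar) / (c * η * T) + C / c := by
  have hT' : (0 : ℝ) < T := Nat.cast_pos.mpr hT
  have hsum : c * ∑ t ∈ range T, a t ≤ (φ 0 - φ T) / η + T * C := by
    calc c * ∑ t ∈ range T, a t ≤ ∑ t ∈ range T, ((φ t - φ (t + 1)) / η + C) := by
          rw [mul_sum]; exact sum_le_sum fun t _ => h t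
      _ = (φ 0 - φ T) / η + T * C := by
          rw [sum_add_distrib, ← sum_div, sum_range_sub', sum_const, card_range, nsmul_eq_mul]
  rw [show (φ 0 - φstar) / (c * η * T) + C / c = ((φ 0 - φstar) / η + T * C) / (c * T) by
    field_simp, le_div_iff₀ (by positivity)]
  calc 1 / (T : ℝ) * (∑ t ∈ range T, a t) * (c * T) = c * ∑ t ∈ range T, a t := by field_simp
    _ ≤ (φ 0 - φ T) / η + T * C := hsum
    _ ≤ (φ 0 - φstar) / η + T * C := by gcongr; exact hφ T

theorem layerwise_craft_convergence_general {N Q : ℕ} (hQ : 1 ≤ Q)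
    (n : Fin Q → ℕ)
    (f : Fin N → PiLp 2 (fun q : Fin Q => EuclideanSpace ℝ (Fin (n q))) → ℝ)
    (L Gf : ℝ) (Lq : Fin Q → ℝ)
    (hdiff : ∀ i, Differentiable ℝ (f i))
    (hLip : ∀ i x y, ‖gradient (f i) x - gradient (f i) y‖ ≤ L * ‖x - y‖)
    (hGf : ∀ i x, ‖gradient (f i) x‖ ≤ Gf)
    (hLipBlock : ∀ i q x y, ‖gradient (f i) x q - gradient (f i) y q‖ ≤ Lq q * ‖x - y‖)
    (ρ : Fin N → ℝ) (hρpos : ∀ i, 0 < ρ i) (hρsum : ∑ i, ρ i = 1)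
    (F : PiLp 2 (fun q : Fin Q => EuclideanSpace ℝ (Fin (n q))) → ℝ)
    (hF : F = fun x => ∑ i, ρ i * f i x)
    (Fstar : ℝ) (hFstar : ∀ x, Fstar ≤ F x)
    (ρmin : ℝ) (hρminlb : ∀ i, ρmin ≤ ρ i) (hρminmem : ∃ i, ρ i = ρmin)
    (c : ℝ) (hc : c = ρmin / Gf)
    (ηl ηg : ℝ) (hηl : 0 < ηl) (hηg : 0 < ηg)
    (K : Fin N → ℕ) (hK : ∀ i, 1 ≤ K i)
    (Kmax : ℕ) (hKmaxub : ∀ i, K i ≤ Kmax)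
    (θt g : ℕ → PiLp 2 (fun q : Fin Q => EuclideanSpace ℝ (Fin (n q))))
    (hstep : ∀ t, θt (t + 1) = θt t - ηg • g t)
    (gI : ℕ → Fin N → PiLp 2 (fun q : Fin Q => EuclideanSpace ℝ (Fin (n q))))
    (hgI : ∀ t i, gI t i = ηl • ∑ k ∈ Finset.range (K i),
        gradient (f i) (traj (f i) ηl (θt t) k))
    (hne : ∀ t i q, gI t i q ≠ 0)
    (halign : ∀ t i q, ⟪‖gI t i q‖⁻¹ • gI t i q, g t q⟫_ℝ = ρ i)
    (Gq : Fin Q → ℝ) (hGq : ∀ t q, ‖g t q‖ ≤ Gq q)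
    (Bq : Fin Q → ℝ) (hBq : ∀ q, Bq q = Lq q * Gf / 2 * (Gq q + ∑ i, (ρ i) ^ 2))
    (Blayer : ℝ) (hBlayer : Blayer = ∑ q, Bq q)
    (Glayer2 : ℝ) (hGlayer2 : Glayer2 = ∑ q, (Gq q) ^ 2)
    (T : ℕ) (hT : 1 ≤ T) :
    (1 / (T : ℝ)) * ∑ t ∈ Finset.range T, ‖gradient F (θt t)‖ ^ 2 ≤
      (F (θt 0) - Fstar) / (c * ηg * T) + L * ηg * Glayer2 / (2 * c)
      + Blayer / c * (ηl * ((Kmax : ℝ) - 1)) := by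
  obtain ⟨i₀, rfl⟩ := hρminmem
  obtain rfl : gI = fun t i => clientUpdate (f i) ηl (K i) (θt t) := funext₂ hgI
  subst hc hBlayer hGlayer2
  have hupd₀ : clientUpdate (f i₀) ηl (K i₀) (θt 0) ≠ 0 := fun h => hne 0 i₀ ⟨0, hQ⟩ (by simp [h])
  -- a nonzero client update makes the space nontrivial, which forces `L ≥ 0` and `Lq q ≥ 0`
  have := nontrivial_of_ne _ _ hupd₀
  have hGfpos : 0 < Gf := by
    obtain ⟨x, hx⟩ := exists_gradient_ne_zero_of_clientUpdate_ne_zero hupd₀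
    exact (norm_pos_iff.mpr hx).trans_le (hGf i₀ x)
  have hρ : ∀ i, 0 ≤ ρ i := fun i => (hρpos i).le
  have hgradF : ∀ x, gradient F x = ∑ i, ρ i • gradient (f i) x := hF ▸ gradient_sum_mul ρ hdiff
  have hdir : ∀ t, ρ i₀ / Gf * ‖gradient F (θt t)‖ ^ 2
      ≤ ⟪gradient F (θt t), g t⟫_ℝ + ηl * (Kmax - 1) * ∑ q, Bq q := fun t => by
    refine (div_mul_sq_le_mul (hρ i₀) hGfpos (norm_nonneg _) ?_).trans ?_
    · simpa only [hgradF] using norm_sum_smul_le_of_norm_le hρ hρsum fun i => hGf i (θt t)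
    rw [mul_sum, ← sub_le_iff_le_add]
    refine PiLp.mul_norm_sub_le_inner _ (g t) (hρ i₀) fun q => ?_
    rw [hBq, hgradF]
    exact (inner_lower_bound_of_aligned_clientUpdates
      (PiLp.projₗ 2 (fun q => EuclideanSpace ℝ (Fin (n q))) q) f (hρ i₀) hρminlb hρsum hηl hK
      (fun i => Nat.cast_le.mpr (hKmaxub i)) hGf
      (nonneg_of_norm_sub_le_mul_norm_sub (hLipBlock i₀ q)) (hLipBlock · q) (hne t · q)
      (halign t · q) (hGq t q)).trans_eq' (by rw [PiLp.projₗ_apply]; ring)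
  refine (one_div_mul_sum_le_of_descent (φ := fun t => F (θt t))
    (C := L * ηg * (∑ q, Gq q ^ 2) / 2 + ηl * (Kmax - 1) * ∑ q, Bq q) (div_pos (hρpos i₀) hGfpos)
    hηg (fun t => hFstar _) (fun t => ?_) hT).trans_eq (by ring)
  rw [hstep, ← add_assoc]
  refine mul_norm_gradient_sq_le_of_step (hF ▸ differentiable_sum_mul ρ hdiff) (fun x y => ?_)
    (nonneg_of_norm_sub_le_mul_norm_sub (hLip i₀)) hηg (PiLp.norm_sq_le_sum_sq _ (hGq t)) (hdir t)
  simpa only [hgradF, ← sum_sub_distrib, ← smul_sub] using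
    norm_sum_smul_le_of_norm_le hρ hρsum fun i => hLip i x y

/-- **Layer-wise multi-step projection convergence.**
`ℝ^d` is partitioned into `Q` coordinate blocks of sizes `n q` (with `Σ_q n q = d`),
modeled as `PiLp 2 (fun q => EuclideanSpace ℝ (Fin (n q)))`; `v q` is the block-`q`
component of `v`. Under layer-wise exact alignment constraints
`⟪g_i^{t,q}/‖g_i^{t,q}‖, g_t^q⟫ = ρ_i` and block norm bounds `‖g_t^q‖ ≤ G^q`,
`(1/T) Σ_{t<T} ‖∇F(θ_t)‖² ≤ (F(θ₀)−F⋆)/(c η_g T) + L η_g G_layer²/(2c)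
  + (B_layer/c) η_l (K_max − 1)`. -/
theorem layerwise_craft_convergence {d N Q : ℕ} (hd : 1 ≤ d) (hN : 1 ≤ N) (hQ : 1 ≤ Q)
    (n : Fin Q → ℕ) (hn : ∑ q, n q = d)
    (f : Fin N → PiLp 2 (fun q : Fin Q => EuclideanSpace ℝ (Fin (n q))) → ℝ)
    (L Gf : ℝ) (Lq : Fin Q → ℝ)
    (hdiff : ∀ i, Differentiable ℝ (f i))
    (hLip : ∀ i x y, ‖gradient (f i) x - gradient (f i) y‖ ≤ L * ‖x - y‖)
    (hGf : ∀ i x, ‖gradient (f i) x‖ ≤ Gf)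
    (hLipBlock : ∀ i q x y, ‖gradient (f i) x q - gradient (f i) y q‖ ≤ Lq q * ‖x - y‖)
    (ρ : Fin N → ℝ) (hρpos : ∀ i, 0 < ρ i) (hρsum : ∑ i, ρ i = 1)
    (F : PiLp 2 (fun q : Fin Q => EuclideanSpace ℝ (Fin (n q))) → ℝ)
    (hF : F = fun x => ∑ i, ρ i * f i x)
    (Fstar : ℝ) (hFstar : ∀ x, Fstar ≤ F x)
    (ρmin : ℝ) (hρminlb : ∀ i, ρmin ≤ ρ i) (hρminmem : ∃ i, ρ i = ρmin)
    (c : ℝ) (hc : c = ρmin / Gf)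
    (ηl ηg : ℝ) (hηl : 0 < ηl) (hηg : 0 < ηg)
    (K : Fin N → ℕ) (hK : ∀ i, 1 ≤ K i)
    (Kmax : ℕ) (hKmaxub : ∀ i, K i ≤ Kmax) (hKmaxmem : ∃ i, K i = Kmax)
    (θt g : ℕ → PiLp 2 (fun q : Fin Q => EuclideanSpace ℝ (Fin (n q))))
    (hstep : ∀ t, θt (t + 1) = θt t - ηg • g t)
    (gI : ℕ → Fin N → PiLp 2 (fun q : Fin Q => EuclideanSpace ℝ (Fin (n q))))
    (hgI : ∀ t i, gI t i = ηl • ∑ k ∈ Finset.range (K i),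
        gradient (f i) (traj (f i) ηl (θt t) k))
    (hne : ∀ t i q, gI t i q ≠ 0)
    (halign : ∀ t i q, ⟪‖gI t i q‖⁻¹ • gI t i q, g t q⟫_ℝ = ρ i)
    (Gq : Fin Q → ℝ) (hGq : ∀ t q, ‖g t q‖ ≤ Gq q)
    (Bq : Fin Q → ℝ) (hBq : ∀ q, Bq q = Lq q * Gf / 2 * (Gq q + ∑ i, (ρ i) ^ 2))
    (Blayer : ℝ) (hBlayer : Blayer = ∑ q, Bq q)
    (Glayer2 : ℝ) (hGlayer2 : Glayer2 = ∑ q, (Gq q) ^ 2)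
    (T : ℕ) (hT : 1 ≤ T) :
    (1 / (T : ℝ)) * ∑ t ∈ Finset.range T, ‖gradient F (θt t)‖ ^ 2 ≤
      (F (θt 0) - Fstar) / (c * ηg * T) + L * ηg * Glayer2 / (2 * c)
      + Blayer / c * (ηl * ((Kmax : ℝ) - 1)) :=
  layerwise_craft_convergence_general hQ n f L Gf Lq hdiff hLip hGf hLipBlock ρ hρpos hρsum F hF
    Fstar hFstar ρmin hρminlb hρminmem c hc ηl ηg hηl hηg K hK Kmax hKmaxub θt g hstep gI hgI hne
    halign Gq hGq Bq hBq Blayer hBlayer Glayer2 hGlayer2 T hT
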